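/- arXiv:2012.09541 — 5 statements merged into one kernel-verified Lean document; each statement's English description precedes it below -/
import Mathlib

section
/- Let W be a finite set of workers, M ⊆ W a set of minority workers, s an injective score function on W, m a minority ratio with 0 ≤ m ≤ 1, and q a nonnegative integer with q ≤ |W| such that m·q is an integer. Then there exists exactly one set W* ⊆ W with |W*| = q such that W* respects minority rights for quota q and is minority fair. -/
/-!
Let `T` be the `q` best workers overall and `a` the number of minorities in `T`. In a fair
set the hired minorities and the hired non-minorities are each the best of their group, so a
fair set of size `q` is determined by its number `b` of minorities. Fairness (i), (ii) force
`a ≤ b`, the rights condition forces `min (m q) |M| ≤ b`, and fairness (iii) allows `a < b`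
only when `b ≤ m q`; hence `b = max a (min (m q) |M|)`, which gives uniqueness. Conversely
`T` is admissible when `min (m q) |M| ≤ a`, and otherwise the best `min (m q) |M|` minorities
together with the best remaining non-minorities are.
-/

open Finset

variable {ι : Type*} [DecidableEq ι]

/-- The (up to) `k` highest-scoring elements of `X`, chosen greedily
(with injective scores this is the set of the `k` highest-scoring elements). -/
noncomputable def topOf (s : ι → ℝ) : ℕ → Finset ι → Finset ι
  | 0, _ => ∅
  | k + 1, X =>
    if h : X.Nonempty then
      insert (X.exists_max_image s h).choose
        (topOf s k (X.erase (X.exists_max_image s h).choose))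
    else ∅

/-- `H` respects minority rights for quota `q` (w.r.t. minorities `M` and ratio `m`):
either `|M| ≥ m·q` and the fraction of minorities in `H` is at least `m`
(stated multiplicatively as `ω(H) ≥ m·|H|`), or `|M| < m·q` and `M ⊆ H`. -/
def RespectsRightsSet (M : Finset ι) (m : ℝ) (q : ℕ) (H : Finset ι) : Prop :=
  (m * (q : ℝ) ≤ (M.card : ℝ) ∧ m * (H.card : ℝ) ≤ ((H ∩ M).card : ℝ)) ∨
  ((M.card : ℝ) < m * (q : ℝ) ∧ M ⊆ H)

/-- `H` is minority fair (w.r.t. workers `W`, minorities `M`, scores `s`, ratio `m`):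
(i) within `M` and within `W ∖ M` selection follows the scores; (ii) no minority with a
higher score is left out while a non-minority is hired; (iii) a lower-scoring minority is
hired over a higher-scoring non-minority only if the minority fraction of `H` is at most
`m` (stated multiplicatively as `ω(H) ≤ m·|H|`). -/
def MinorityFairSet (W M : Finset ι) (s : ι → ℝ) (m : ℝ) (H : Finset ι) : Prop :=
  (∀ w ∈ M, ∀ w' ∈ M, w ∈ H → w' ∉ H → s w' < s w) ∧
  (∀ w ∈ W \ M, ∀ w' ∈ W \ M, w ∈ H → w' ∉ H → s w' < s w) ∧
  (∀ w ∈ W \ M, ∀ w' ∈ M, s w < s w' → w ∈ H → w' ∈ H) ∧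
  ((∃ w ∈ W \ M, ∃ w' ∈ M, s w' < s w ∧ w ∉ H ∧ w' ∈ H) →
    ((H ∩ M).card : ℝ) ≤ m * (H.card : ℝ))

def IsTopSet (s : ι → ℝ) (X A : Finset ι) : Prop :=
  A ⊆ X ∧ ∀ w ∈ A, ∀ w' ∈ X, w' ∉ A → s w' < s w

section TopSets

variable {s : ι → ℝ} {X Y A B H : Finset ι}

namespace IsTopSet

theorem mem_of_lt (hA : IsTopSet s X A) {w w' : ι} (hw : w ∈ A) (hw' : w' ∈ X)
    (h : s w < s w') : w' ∈ A := by
  by_contra hn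
  exact (hA.2 w hw w' hw' hn).asymm h

theorem subset_of_card_le (hA : IsTopSet s X A) (hB : IsTopSet s X B)
    (h : A.card ≤ B.card) : A ⊆ B := by
  intro w hwA
  by_contra hwB
  have hBA : B ⊆ A := fun w' hw' => hA.mem_of_lt hwA (hB.1 hw') (hB.2 w' hw' w (hA.1 hwA) hwB)
  exact (card_lt_card ⟨hBA, fun hAB => hwB (hAB hwA)⟩).not_ge h

theorem eq_of_card_eq (hA : IsTopSet s X A) (hB : IsTopSet s X B) (h : A.card = B.card) :
    A = B :=
  (hA.subset_of_card_le hB h.le).antisymm (hB.subset_of_card_le hA h.ge)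

theorem inter (hA : IsTopSet s X A) (hY : Y ⊆ X) : IsTopSet s Y (A ∩ Y) :=
  ⟨inter_subset_right, fun w hw w' hw' hn =>
    hA.2 w (mem_of_mem_inter_left hw) w' (hY hw') fun h => hn (mem_inter.2 ⟨h, hw'⟩)⟩

end IsTopSet

theorem isTopSet_inter_iff :
    IsTopSet s X (H ∩ X) ↔ ∀ w ∈ X, ∀ w' ∈ X, w ∈ H → w' ∉ H → s w' < s w := by
  simp only [IsTopSet, inter_subset_right, true_and, mem_inter, not_and]
  exact ⟨fun h w hw w' hw' hwH hw'H => h w ⟨hwH, hw⟩ w' hw' fun h => absurd h hw'H,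
    fun h w hw w' hw' hn => h w hw.2 w' hw' hw.1 fun hw'H => hn hw'H hw'⟩

theorem isTopSet_topOf : ∀ (n : ℕ) {X : Finset ι}, Set.InjOn s X → IsTopSet s X (topOf s n X)
  | 0, X, _ => ⟨empty_subset X, by simp [topOf]⟩
  | n + 1, X, hs => by
    rw [topOf]
    split_ifs with hX
    · obtain ⟨hxX, hxmax⟩ := (X.exists_max_image s hX).choose_spec
      set x := (X.exists_max_image s hX).choose
      have hrest := isTopSet_topOf n (hs.mono (coe_subset.2 (erase_subset x X)))
      refine ⟨insert_subset hxX (hrest.1.trans (erase_subset x X)), ?_⟩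
      intro w hw w' hw' hn
      rw [mem_insert, not_or] at hn
      rcases mem_insert.1 hw with rfl | hw
      · exact (hxmax w' hw').lt_of_ne fun he => hn.1 (hs hw' hxX he)
      · exact hrest.2 w hw w' (mem_erase.2 ⟨hn.1, hw'⟩) hn.2
    · exact ⟨empty_subset X, by simp⟩

theorem card_topOf (hs : Set.InjOn s X) (n : ℕ) : (topOf s n X).card = min n X.card := by
  induction n generalizing X with
  | zero => simp [topOf]
  | succ n ih =>
    rw [topOf]
    split_ifs with hX
    · set x := (X.exists_max_image s hX).choose
      have hxX : x ∈ X := (X.exists_max_image s hX).choose_spec.1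
      have hs' : Set.InjOn s (X.erase x) := hs.mono (coe_subset.2 (erase_subset x X))
      have hx : x ∉ topOf s n (X.erase x) := fun h =>
        notMem_erase x X ((isTopSet_topOf n hs').1 h)
      rw [card_insert_of_notMem hx, ih hs', card_erase_of_mem hxX]
      have := card_pos.2 hX
      omega
    · simp [not_nonempty_iff_eq_empty.1 hX]

theorem exists_mem_notMem_of_card_eq {T : Finset ι} (hc : H.card = T.card) {x : ι}
    (hxT : x ∈ T) (hxH : x ∉ H) : ∃ w ∈ H, w ∉ T := by
  by_contra! h
  exact hxH (eq_of_subset_of_card_le h hc.ge ▸ hxT)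

end TopSets

section Hiring

variable {W M H H' T A B : Finset ι} {s : ι → ℝ} {m : ℝ} {q k : ℕ}

theorem respectsRightsSet_iff (hk : m * q = k) (hH : H.card = q) :
    RespectsRightsSet M m q H ↔ min k M.card ≤ (H ∩ M).card := by
  rw [RespectsRightsSet, hH, hk]
  constructor
  · rintro (⟨-, h⟩ | ⟨-, h⟩)
    · exact min_le_of_left_le (by exact_mod_cast h)
    · exact min_le_of_right_le (card_le_card (subset_inter h Subset.rfl))
  · intro h
    rcases le_or_gt k M.card with hkM | hkM
    · rw [min_eq_left hkM] at h
      exact Or.inl ⟨by exact_mod_cast hkM, by exact_mod_cast h⟩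
    · rw [min_eq_right hkM.le] at h
      refine Or.inr ⟨by exact_mod_cast hkM, ?_⟩
      rw [← eq_of_subset_of_card_le inter_subset_right h]
      exact inter_subset_left

theorem minorityFairSet_of_isTopSet (hMW : M ⊆ W) (hT : IsTopSet s W T) :
    MinorityFairSet W M s m T := by
  refine ⟨fun w _ w' hw' hw hn => hT.2 w hw w' (hMW hw') hn,
    fun w _ w' hw' hw hn => hT.2 w hw w' (mem_sdiff.1 hw').1 hn,
    fun w _ w' hw' h hw => hT.mem_of_lt hw (hMW hw') h, ?_⟩
  rintro ⟨w, hw, w', -, h, hwT, hw'T⟩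
  exact absurd (hT.2 w' hw'T w (mem_sdiff.1 hw).1 hwT) h.not_gt

theorem union_inter_of_subset_sdiff (hA : A ⊆ M) (hB : B ⊆ W \ M) : (A ∪ B) ∩ M = A := by
  ext x
  have := @hA x
  have := @hB x
  simp only [mem_inter, mem_union, mem_sdiff] at *
  tauto

theorem union_inter_sdiff_of_subset (hMW : M ⊆ W) (hA : A ⊆ M) (hB : B ⊆ W \ M) :
    (A ∪ B) ∩ (W \ M) = B := by
  ext x
  have := @hA x
  have := @hB x
  have := @hMW x
  simp only [mem_inter, mem_union, mem_sdiff] at *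
  tauto

theorem minorityFairSet_union (hMW : M ⊆ W) (hT : IsTopSet s W T) (hA : IsTopSet s M A)
    (hB : IsTopSet s (W \ M) B) (hTA : T ∩ M ⊆ A) (hBT : B ⊆ T)
    (hAm : (A.card : ℝ) ≤ m * (A ∪ B).card) : MinorityFairSet W M s m (A ∪ B) := by
  have hM := union_inter_of_subset_sdiff hA.1 hB.1
  have hN := union_inter_sdiff_of_subset hMW hA.1 hB.1
  refine ⟨isTopSet_inter_iff.1 (by rwa [hM]), isTopSet_inter_iff.1 (by rwa [hN]), ?_,
    fun _ => by rwa [hM]⟩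
  intro w hw w' hw' h hwH
  have hwB : w ∈ B := (mem_union.1 hwH).resolve_left fun hwA => (mem_sdiff.1 hw).2 (hA.1 hwA)
  exact mem_union_left B (hTA (mem_inter.2 ⟨hT.mem_of_lt (hBT hwB) (hMW hw') h, hw'⟩))

theorem exists_respectsRightsSet_minorityFairSet (hMW : M ⊆ W) (hs : Set.InjOn s W)
    (hk : m * q = k) (hkq : k ≤ q) (hT : IsTopSet s W T) (hTq : T.card = q) :
    ∃ H, H ⊆ W ∧ H.card = q ∧ RespectsRightsSet M m q H ∧ MinorityFairSet W M s m H := by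
  rcases le_or_gt (min k M.card) (T ∩ M).card with hle | hlt
  · exact ⟨T, hT.1, hTq, (respectsRightsSet_iff hk hTq).2 hle,
      minorityFairSet_of_isTopSet hMW hT⟩
  set r := min k M.card
  have hTM := hT.inter hMW
  have hTN := hT.inter (W.sdiff_subset (t := M))
  have hTNc : (T ∩ (W \ M)).card + (T ∩ M).card = q := by
    rw [← inter_sdiff_assoc, inter_eq_left.2 hT.1, card_sdiff_add_card_inter, hTq]
  have hsM : Set.InjOn s (M : Set ι) := hs.mono (coe_subset.2 hMW)
  have hsN : Set.InjOn s ((W \ M : Finset ι) : Set ι) := hs.mono (coe_subset.2 sdiff_subset)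
  have hA := isTopSet_topOf r hsM
  have hB := isTopSet_topOf (q - r) hsN
  have hAc : (topOf s r M).card = r := by
    rw [card_topOf hsM]
    exact min_eq_left (min_le_right _ _)
  have hBc : (topOf s (q - r) (W \ M)).card = q - r := by
    rw [card_topOf hsN]
    have := card_le_card hTN.1
    omega
  have hABc : (topOf s r M ∪ topOf s (q - r) (W \ M)).card = q := by
    rw [card_union_of_disjoint (disjoint_sdiff.mono hA.1 hB.1), hAc, hBc]
    omega
  refine ⟨_, union_subset (hA.1.trans hMW) (hB.1.trans sdiff_subset), hABc, ?_,
    minorityFairSet_union hMW hT hA hB (hTM.subset_of_card_le hA (by omega))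
      ((hB.subset_of_card_le hTN (by omega)).trans inter_subset_left) ?_⟩
  · rw [respectsRightsSet_iff hk hABc, union_inter_of_subset_sdiff hA.1 hB.1, hAc]
  · rw [hABc, hk, hAc]
    exact_mod_cast min_le_left _ _

namespace MinorityFairSet

theorem inter_subset (hf : MinorityFairSet W M s m H) (hH : H ⊆ W) (hT : IsTopSet s W T)
    (hc : H.card = T.card) : T ∩ M ⊆ H := by
  intro x hx
  by_contra hxH
  obtain ⟨w, hwH, hwT⟩ := exists_mem_notMem_of_card_eq hc (mem_of_mem_inter_left hx) hxH
  have hlt : s w < s x := hT.2 x (mem_of_mem_inter_left hx) w (hH hwH) hwT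
  by_cases hwM : w ∈ M
  · exact (hf.1 w hwM x (mem_of_mem_inter_right hx) hwH hxH).asymm hlt
  · exact hxH (hf.2.2.1 w (mem_sdiff.2 ⟨hH hwH, hwM⟩) x (mem_of_mem_inter_right hx) hlt hwH)

theorem card_inter_le (hf : MinorityFairSet W M s m H) (hH : H ⊆ W) (hT : IsTopSet s W T)
    (hc : H.card = T.card) (hlt : (T ∩ M).card < (H ∩ M).card) :
    ((H ∩ M).card : ℝ) ≤ m * H.card := by
  obtain ⟨x, hxHM, hxTM⟩ := exists_mem_notMem_of_card_lt_card hlt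
  obtain ⟨hxH, hxM⟩ := mem_inter.1 hxHM
  have hxT : x ∉ T := fun h => hxTM (mem_inter.2 ⟨h, hxM⟩)
  obtain ⟨w, hwT, hwH⟩ := exists_mem_notMem_of_card_eq hc.symm hxH hxT
  have hlt : s x < s w := hT.2 w hwT x (hH hxH) hxT
  have hwM : w ∉ M := fun hwM => (hf.1 x hxM w hwM hxH hwH).asymm hlt
  exact hf.2.2.2 ⟨w, mem_sdiff.2 ⟨hT.1 hwT, hwM⟩, x, hxM, hlt, hwH, hxH⟩

theorem card_inter_eq_max (hf : MinorityFairSet W M s m H) (hH : H ⊆ W)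
    (hr : RespectsRightsSet M m q H) (hT : IsTopSet s W T) (hHq : H.card = q)
    (hTq : T.card = q) (hk : m * q = k) :
    (H ∩ M).card = max (T ∩ M).card (min k M.card) := by
  have hc : H.card = T.card := hHq.trans hTq.symm
  have hge : (T ∩ M).card ≤ (H ∩ M).card :=
    card_le_card (subset_inter (hf.inter_subset hH hT hc) inter_subset_right)
  have hquota := (respectsRightsSet_iff hk hHq).1 hr
  have hle : (T ∩ M).card < (H ∩ M).card → (H ∩ M).card ≤ k := fun hlt => by
    have := hf.card_inter_le hH hT hc hlt
    rw [hHq, hk] at this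
    exact_mod_cast this
  have := card_le_card (inter_subset_right (s₁ := H) (s₂ := M))
  omega

theorem eq_of_card_eq (hf : MinorityFairSet W M s m H) (hf' : MinorityFairSet W M s m H')
    (hH : H ⊆ W) (hH' : H' ⊆ W) (hc : H.card = H'.card)
    (hcM : (H ∩ M).card = (H' ∩ M).card) : H = H' := by
  have hsdiff {K : Finset ι} (hK : K ⊆ W) : K ∩ (W \ M) = K \ M := by
    rw [← inter_sdiff_assoc, inter_eq_left.2 hK]
  have hM : H ∩ M = H' ∩ M :=
    (isTopSet_inter_iff.2 hf.1).eq_of_card_eq (isTopSet_inter_iff.2 hf'.1) hcM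
  have hN : H \ M = H' \ M := by
    have := (isTopSet_inter_iff.2 hf.2.1).eq_of_card_eq (isTopSet_inter_iff.2 hf'.2.1)
    rw [hsdiff hH, hsdiff hH'] at this
    apply this
    have := card_sdiff_add_card_inter H M
    have := card_sdiff_add_card_inter H' M
    omega
  rw [← sdiff_union_inter H M, ← sdiff_union_inter H' M, hM, hN]

end MinorityFairSet

end Hiring

theorem unique_fair_rights_set_general (W M : Finset ι) (s : ι → ℝ) (m : ℝ) (q : ℕ)
    (hMW : M ⊆ W) (hs : Set.InjOn s ↑W) (hm1 : m ≤ 1)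
    (hq : q ≤ W.card) (hint : ∃ k : ℕ, m * (q : ℝ) = (k : ℝ)) :
    ∃! H : Finset ι, H ⊆ W ∧ H.card = q ∧ RespectsRightsSet M m q H ∧
      MinorityFairSet W M s m H := by
  obtain ⟨k, hk⟩ := hint
  have hkq : k ≤ q := by
    have : (k : ℝ) ≤ q := hk ▸ mul_le_of_le_one_left q.cast_nonneg hm1
    exact_mod_cast this
  have hT := isTopSet_topOf q hs
  have hTq : (topOf s q W).card = q := by rw [card_topOf hs, min_eq_left hq]
  obtain ⟨H, hH⟩ := exists_respectsRightsSet_minorityFairSet hMW hs hk hkq hT hTq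
  refine ⟨H, hH, fun H' ⟨hH'W, hH'q, hH'r, hH'f⟩ => ?_⟩
  obtain ⟨hHW, hHq, hHr, hHf⟩ := hH
  refine hH'f.eq_of_card_eq hHf hH'W hHW (hH'q.trans hHq.symm) ?_
  rw [hH'f.card_inter_eq_max hH'W hH'r hT hH'q hTq hk,
    hHf.card_inter_eq_max hHW hHr hT hHq hTq hk]

/-- For every hiring problem `(W, M, s, m)` (with `M ⊆ W`, `s` injective
on `W`, `0 ≤ m ≤ 1`) and every `q ≤ |W|` such that `m·q` is an integer, there exists
exactly one set `W* ⊆ W` with `|W*| = q` that respects minority rights for quota `q` and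
is minority fair. -/
theorem unique_fair_rights_set (W M : Finset ι) (s : ι → ℝ) (m : ℝ) (q : ℕ)
    (hMW : M ⊆ W) (hs : Set.InjOn s ↑W) (hm0 : 0 ≤ m) (hm1 : m ≤ 1)
    (hq : q ≤ W.card) (hint : ∃ k : ℕ, m * (q : ℝ) = (k : ℝ)) :
    ∃! H : Finset ι, H ⊆ W ∧ H.card = q ∧ RespectsRightsSet M m q H ∧
      MinorityFairSet W M s m H :=
  unique_fair_rights_set_general W M s m q hMW hs hm1 hq hint
end

section
/- Let φ and φ' be rules that both respect static minority rights, are static minority fair, and are aggregation independent. Then for every hiring problem (W, M, s, m) and every sequence of hires λ = ⟨q₁,…,q_t⟩ with q₁+⋯+q_t ≤ |W| and m·(q₁+⋯+q_r) an integer for every r ≤ t, φ(W,λ) = φ'(W,λ). -/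
open Finset

variable {ι : Type*} [DecidableEq ι]

/-- A rule: for each hiring problem `(M, s, m)`, each pool `W` of available workers, each
set `A` of previously hired workers and each quota `q`, it selects `min(q, |W|)` workers
from `W`. -/
structure Rule (ι : Type*) [DecidableEq ι] where
  sel : Finset ι → (ι → ℝ) → ℝ → Finset ι → Finset ι → ℕ → Finset ι
  sel_subset : ∀ M s m W A q, sel M s m W A q ⊆ W
  sel_card : ∀ M s m W A q, (sel M s m W A q).card = min q W.card

/-- Round-by-round application of a rule along a sequence of hires: after each round the
hired workers are removed from the pool and added to the previously-hired set. -/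
def Rule.seq (φ : Rule ι) (M : Finset ι) (s : ι → ℝ) (m : ℝ) :
    Finset ι → Finset ι → List ℕ → Finset ι
  | _, _, [] => ∅
  | W, A, q :: rest =>
    φ.sel M s m W A q ∪
      φ.seq M s m (W \ φ.sel M s m W A q) (A ∪ φ.sel M s m W A q) rest

/-- A rule respects static minority rights if, for every hiring problem and every
one-round sequence `⟨q⟩` with `q ≤ |W|`, the selected set respects minority rights for
quota `q`. -/
def Rule.StaticMinorityRights (φ : Rule ι) : Prop :=
  ∀ (M : Finset ι) (s : ι → ℝ) (m : ℝ) (W : Finset ι), M ⊆ W → Set.InjOn s ↑W →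
    0 ≤ m → m ≤ 1 → ∀ q : ℕ, q ≤ W.card →
      RespectsRightsSet M m q (φ.seq M s m W ∅ [q])

/-- A rule is static minority fair if, for every hiring problem and every one-round
sequence `⟨q⟩` with `q ≤ |W|`, the selected set is minority fair. -/
def Rule.StaticMinorityFair (φ : Rule ι) : Prop :=
  ∀ (M : Finset ι) (s : ι → ℝ) (m : ℝ) (W : Finset ι), M ⊆ W → Set.InjOn s ↑W →
    0 ≤ m → m ≤ 1 → ∀ q : ℕ, q ≤ W.card →
      MinorityFairSet W M s m (φ.seq M s m W ∅ [q])

/-- A rule is aggregation independent if `φ(W,A,q) = φ(W,A,⟨q₁, q − q₁⟩)` for all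
`q ≥ q₁ ≥ 0` and all `W`, `A`. -/
def Rule.AggIndep (φ : Rule ι) : Prop :=
  ∀ (M : Finset ι) (s : ι → ℝ) (m : ℝ) (W A : Finset ι) (q q₁ : ℕ), q₁ ≤ q →
    φ.sel M s m W A q = φ.seq M s m W A [q₁, q - q₁]

private lemma collapse (φ : Rule ι) (hA : φ.AggIndep)
    (M : Finset ι) (s : ι → ℝ) (m : ℝ) (W : Finset ι) :
    ∀ (lam : List ℕ) (a : ℕ),
      φ.sel M s m W ∅ a ∪
        φ.seq M s m (W \ φ.sel M s m W ∅ a) (φ.sel M s m W ∅ a) lam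
      = φ.sel M s m W ∅ (a + lam.sum) := by
  intro lam
  induction lam with
  | nil => intro a; simp [Rule.seq]
  | cons q rest ih =>
    intro a
    have hq : φ.sel M s m W ∅ (a + q) =
        φ.sel M s m W ∅ a ∪
          φ.sel M s m (W \ φ.sel M s m W ∅ a) (φ.sel M s m W ∅ a) q := by
      have h := hA M s m W ∅ (a + q) a (Nat.le_add_right a q)
      simpa [Rule.seq, Nat.add_sub_cancel_left] using h
    have hsd : (W \ φ.sel M s m W ∅ a) \
        φ.sel M s m (W \ φ.sel M s m W ∅ a) (φ.sel M s m W ∅ a) q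
        = W \ φ.sel M s m W ∅ (a + q) := by
      rw [sdiff_sdiff, sup_eq_union, ← hq]
    have hih := ih (a + q)
    rw [show a + (q :: rest).sum = a + q + rest.sum by simp [Nat.add_assoc]]
    rw [← hih]
    show φ.sel M s m W ∅ a ∪ Rule.seq φ M s m _ _ (q :: rest) = _
    rw [Rule.seq, ← union_assoc, ← hq, hsd]

private lemma upset_unique (s : ι → ℝ) (A B : Finset ι) (hc : A.card = B.card)
    (hAB : ∀ a ∈ A, ∀ b ∈ B, b ∉ A → s b < s a)
    (hBA : ∀ b ∈ B, ∀ a ∈ A, a ∉ B → s a < s b) : A = B := by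
  by_contra hne
  have h1 : ¬ A ⊆ B := fun h => hne (eq_of_subset_of_card_le h (le_of_eq hc.symm))
  have h2 : ¬ B ⊆ A := fun h => hne (eq_of_subset_of_card_le h (le_of_eq hc)).symm
  obtain ⟨a, haA, haB⟩ := not_subset.mp h1
  obtain ⟨b, hbB, hbA⟩ := not_subset.mp h2
  have t1 := hAB a haA b hbB hbA
  have t2 := hBA b hbB a haA haB
  linarith

private lemma not_card_lt (W M : Finset ι) (s : ι → ℝ) (m : ℝ) (Q : ℕ)
    (hMW : M ⊆ W) (hs : Set.InjOn s ↑W)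
    (H H' : Finset ι) (hHW : H ⊆ W) (hH'W : H' ⊆ W)
    (hHc : H.card = Q) (hH'c : H'.card = Q)
    (hHr : RespectsRightsSet M m Q H) (hH'r : RespectsRightsSet M m Q H')
    (hHf : MinorityFairSet W M s m H) (hH'f : MinorityFairSet W M s m H') :
    ¬ ((H ∩ M).card < (H' ∩ M).card) := by
  intro hlt
  by_cases hcase : (M.card : ℝ) < m * Q
  · -- both must contain M
    have hMH : M ⊆ H := by
      rcases hHr with ⟨h1, _⟩ | ⟨_, h2⟩
      · exact absurd h1 (not_le.mpr hcase)
      · exact h2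
    have hMH' : M ⊆ H' := by
      rcases hH'r with ⟨h1, _⟩ | ⟨_, h2⟩
      · exact absurd h1 (not_le.mpr hcase)
      · exact h2
    rw [inter_eq_right.mpr hMH, inter_eq_right.mpr hMH'] at hlt
    exact lt_irrefl _ hlt
  · push_neg at hcase
    have hHk : m * (Q : ℝ) ≤ ((H ∩ M).card : ℝ) := by
      rcases hHr with ⟨_, h2⟩ | ⟨h1, _⟩
      · rwa [hHc] at h2
      · exact absurd h1 (not_lt.mpr hcase)
    -- get minority w' in H' but not H
    have hns : ¬ (H' ∩ M ⊆ H ∩ M) := fun h => absurd (card_le_card h) (not_le.mpr hlt)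
    obtain ⟨w', hw'1, hw'2⟩ := not_subset.mp hns
    have hw'M : w' ∈ M := (mem_inter.mp hw'1).2
    have hw'H' : w' ∈ H' := (mem_inter.mp hw'1).1
    have hw'H : w' ∉ H := fun h => hw'2 (mem_inter.mpr ⟨h, hw'M⟩)
    -- get non-minority w in H but not H'
    have hd : (H ∩ M).card + (H \ M).card = H.card := card_inter_add_card_sdiff H M
    have hd' : (H' ∩ M).card + (H' \ M).card = H'.card := card_inter_add_card_sdiff H' M
    have hlt2 : (H' \ M).card < (H \ M).card := by omega
    have hns2 : ¬ (H \ M ⊆ H' \ M) := fun h => absurd (card_le_card h) (not_le.mpr hlt2)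
    obtain ⟨w, hw1, hw2⟩ := not_subset.mp hns2
    have hwH : w ∈ H := (mem_sdiff.mp hw1).1
    have hwM : w ∉ M := (mem_sdiff.mp hw1).2
    have hwH' : w ∉ H' := fun h => hw2 (mem_sdiff.mpr ⟨h, hwM⟩)
    have hwW : w ∈ W \ M := mem_sdiff.mpr ⟨hHW hwH, hwM⟩
    have hne : w ≠ w' := fun h => hwM (h ▸ hw'M)
    have hsne : s w ≠ s w' := fun h => hne (hs (by exact_mod_cast hHW hwH) (by exact_mod_cast hMW hw'M) h)
    rcases lt_trichotomy (s w) (s w') with hlt3 | heq | hgt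
    · exact hw'H (hHf.2.2.1 w hwW w' hw'M hlt3 hwH)
    · exact hsne heq
    · have h3 := hH'f.2.2.2 ⟨w, hwW, w', hw'M, hgt, hwH', hw'H'⟩
      rw [hH'c] at h3
      have : ((H' ∩ M).card : ℝ) ≤ ((H ∩ M).card : ℝ) := le_trans h3 hHk
      exact absurd (Nat.cast_lt.mpr hlt) (not_lt.mpr this)

private lemma unique_fair (W M : Finset ι) (s : ι → ℝ) (m : ℝ) (Q : ℕ)
    (hMW : M ⊆ W) (hs : Set.InjOn s ↑W)
    (H H' : Finset ι) (hHW : H ⊆ W) (hH'W : H' ⊆ W)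
    (hHc : H.card = Q) (hH'c : H'.card = Q)
    (hHr : RespectsRightsSet M m Q H) (hH'r : RespectsRightsSet M m Q H')
    (hHf : MinorityFairSet W M s m H) (hH'f : MinorityFairSet W M s m H') :
    H = H' := by
  have k1 := not_card_lt W M s m Q hMW hs H H' hHW hH'W hHc hH'c hHr hH'r hHf hH'f
  have k2 := not_card_lt W M s m Q hMW hs H' H hH'W hHW hH'c hHc hH'r hHr hH'f hHf
  have hk : (H ∩ M).card = (H' ∩ M).card := by omega
  -- minorities coincide
  have e1 : H ∩ M = H' ∩ M := by
    apply upset_unique s _ _ hk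
    · intro a ha b hb hbn
      have haM : a ∈ M := (mem_inter.mp ha).2
      have hbM : b ∈ M := (mem_inter.mp hb).2
      exact hHf.1 a haM b hbM (mem_inter.mp ha).1 (fun h => hbn (mem_inter.mpr ⟨h, hbM⟩))
    · intro b hb a ha han
      have haM : a ∈ M := (mem_inter.mp ha).2
      have hbM : b ∈ M := (mem_inter.mp hb).2
      exact hH'f.1 b hbM a haM (mem_inter.mp hb).1 (fun h => han (mem_inter.mpr ⟨h, haM⟩))
  -- non-minorities coincide
  have hd : (H ∩ M).card + (H \ M).card = H.card := card_inter_add_card_sdiff H M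
  have hd' : (H' ∩ M).card + (H' \ M).card = H'.card := card_inter_add_card_sdiff H' M
  have e2 : H \ M = H' \ M := by
    apply upset_unique s _ _ (by omega)
    · intro a ha b hb hbn
      have haW : a ∈ W \ M := mem_sdiff.mpr ⟨hHW (mem_sdiff.mp ha).1, (mem_sdiff.mp ha).2⟩
      have hbW : b ∈ W \ M := mem_sdiff.mpr ⟨hH'W (mem_sdiff.mp hb).1, (mem_sdiff.mp hb).2⟩
      exact hHf.2.1 a haW b hbW (mem_sdiff.mp ha).1
        (fun h => hbn (mem_sdiff.mpr ⟨h, (mem_sdiff.mp hb).2⟩))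
    · intro b hb a ha han
      have haW : a ∈ W \ M := mem_sdiff.mpr ⟨hHW (mem_sdiff.mp ha).1, (mem_sdiff.mp ha).2⟩
      have hbW : b ∈ W \ M := mem_sdiff.mpr ⟨hH'W (mem_sdiff.mp hb).1, (mem_sdiff.mp hb).2⟩
      exact hH'f.2.1 b hbW a haW (mem_sdiff.mp hb).1
        (fun h => han (mem_sdiff.mpr ⟨h, (mem_sdiff.mp ha).2⟩))
  ext x
  by_cases hxM : x ∈ M
  · constructor <;> intro h
    · have hx : x ∈ H ∩ M := mem_inter.mpr ⟨h, hxM⟩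
      rw [e1] at hx; exact (mem_inter.mp hx).1
    · have hx : x ∈ H' ∩ M := mem_inter.mpr ⟨h, hxM⟩
      rw [← e1] at hx; exact (mem_inter.mp hx).1
  · constructor <;> intro h
    · have hx : x ∈ H \ M := mem_sdiff.mpr ⟨h, hxM⟩
      rw [e2] at hx; exact (mem_sdiff.mp hx).1
    · have hx : x ∈ H' \ M := mem_sdiff.mpr ⟨h, hxM⟩
      rw [← e2] at hx; exact (mem_sdiff.mp hx).1

/-- If `φ` and `φ'` are rules that both respect static minority rights,
are static minority fair, and are aggregation independent, then for every hiring problem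
`(W, M, s, m)` and every sequence of hires `λ = ⟨q₁,…,q_t⟩` with `q₁+⋯+q_t ≤ |W|` and
`m·(q₁+⋯+q_r)` an integer for every `r ≤ t`, `φ(W,λ) = φ'(W,λ)`. -/
theorem static_rules_aggindep_coincide (φ φ' : Rule ι)
    (hφR : φ.StaticMinorityRights) (hφF : φ.StaticMinorityFair) (hφA : φ.AggIndep)
    (hφ'R : φ'.StaticMinorityRights) (hφ'F : φ'.StaticMinorityFair) (hφ'A : φ'.AggIndep)
    (W M : Finset ι) (s : ι → ℝ) (m : ℝ) (lam : List ℕ)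
    (hMW : M ⊆ W) (hs : Set.InjOn s ↑W) (hm0 : 0 ≤ m) (hm1 : m ≤ 1)
    (hsum : lam.sum ≤ W.card)
    (hint : ∀ r : ℕ, ∃ k : ℕ, m * (((lam.take r).sum : ℕ) : ℝ) = (k : ℝ)) :
    φ.seq M s m W ∅ lam = φ'.seq M s m W ∅ lam := by
  set Q := lam.sum with hQ
  have sel0 : ∀ ψ : Rule ι, ψ.sel M s m W ∅ 0 = ∅ := fun ψ => by
    have := ψ.sel_card M s m W ∅ 0
    simpa [card_eq_zero] using this
  have hcollapse : ∀ (ψ : Rule ι), ψ.AggIndep →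
      ψ.seq M s m W ∅ lam = ψ.sel M s m W ∅ Q := by
    intro ψ hA
    have h := collapse ψ hA M s m W lam 0
    simpa [sel0 ψ, sdiff_empty, empty_union, zero_add] using h
  have hone : ∀ (ψ : Rule ι), ψ.seq M s m W ∅ [Q] = ψ.sel M s m W ∅ Q := by
    intro ψ; simp [Rule.seq]
  have hcard : ∀ ψ : Rule ι, (ψ.sel M s m W ∅ Q).card = Q := fun ψ => by
    rw [ψ.sel_card M s m W ∅ Q]; exact min_eq_left hsum
  rw [hcollapse φ hφA, hcollapse φ' hφ'A]
  apply unique_fair W M s m Q hMW hs _ _ (φ.sel_subset M s m W ∅ Q)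
    (φ'.sel_subset M s m W ∅ Q) (hcard φ) (hcard φ')
  · have := hφR M s m W hMW hs hm0 hm1 Q hsum
    rwa [hone φ] at this
  · have := hφ'R M s m W hMW hs hm0 hm1 Q hsum
    rwa [hone φ'] at this
  · have := hφF M s m W hMW hs hm0 hm1 Q hsum
    rwa [hone φ] at this
  · have := hφ'F M s m W hMW hs hm0 hm1 Q hsum
    rwa [hone φ'] at this
end

section
/- If a rule φ is aggregation independent, respects static minority rights, and is static minority fair, then φ respects minority rights and is minority fair, in the sense that for every hiring problem (W, M, s, m) and every sequence of hires λ = ⟨q₁,…,q_t⟩ with total quota q = q₁+⋯+q_t ≤ |W| and m·(q₁+⋯+q_r) an integer for every r ≤ t, the set φ(W,λ) respects minority rights for quota q and is minority fair. -/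
open Finset

variable {ι : Type*} [DecidableEq ι]

/-- If a rule `φ` is aggregation independent, respects static minority
rights, and is static minority fair, then `φ` respects minority rights and is minority
fair: for every hiring problem `(W, M, s, m)` and every sequence of hires
`λ = ⟨q₁,…,q_t⟩` with total quota `q = q₁+⋯+q_t ≤ |W|` and `m·(q₁+⋯+q_r)` an integer
for every `r ≤ t`, the set `φ(W,λ)` respects minority rights for quota `q` and is
minority fair. -/
theorem aggindep_static_implies_dynamic (φ : Rule ι)
    (hφA : φ.AggIndep) (hφR : φ.StaticMinorityRights) (hφF : φ.StaticMinorityFair)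
    (W M : Finset ι) (s : ι → ℝ) (m : ℝ) (lam : List ℕ)
    (hMW : M ⊆ W) (hs : Set.InjOn s ↑W) (hm0 : 0 ≤ m) (hm1 : m ≤ 1)
    (hsum : lam.sum ≤ W.card)
    (hint : ∀ r : ℕ, ∃ k : ℕ, m * (((lam.take r).sum : ℕ) : ℝ) = (k : ℝ)) :
    RespectsRightsSet M m lam.sum (φ.seq M s m W ∅ lam) ∧
      MinorityFairSet W M s m (φ.seq M s m W ∅ lam) := by
  have hsel0 : ∀ W A : Finset ι, φ.sel M s m W A 0 = ∅ := by
    intro W A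
    have := φ.sel_card M s m W A 0
    simpa using Finset.card_eq_zero.mp (by simpa using this)
  have key : ∀ (l : List ℕ) (W A : Finset ι),
      φ.seq M s m W A l = φ.sel M s m W A l.sum := by
    intro l
    induction l with
    | nil => intro W A; simp [Rule.seq, hsel0]
    | cons q rest ih =>
      intro W A
      have h1 := hφA M s m W A (q + rest.sum) q (Nat.le_add_right _ _)
      simp only [Nat.add_sub_cancel_left] at h1
      simp only [Rule.seq, List.sum_cons, h1, ih, Finset.union_empty]
  have hseq1 : ∀ (W A : Finset ι) (q : ℕ),
      φ.seq M s m W A [q] = φ.sel M s m W A q := by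
    intro W A q; simp [Rule.seq]
  have hq : lam.sum ≤ W.card := hsum
  have hR := hφR M s m W hMW hs hm0 hm1 lam.sum hq
  have hF := hφF M s m W hMW hs hm0 hm1 lam.sum hq
  rw [hseq1] at hR hF
  rw [key]
  exact ⟨hR, hF⟩
end

section
/- Let φ be a rule that is aggregation independent and satisfies, for every pool W of available workers, every set A of previously hired workers, and every q ≤ |W|, that φ(W,A,⟨q⟩) equals the minority reserves choice from W: the min(⌈m·q⌉, |M ∩ W|) highest-scoring available minority workers together with the highest-scoring remaining available workers filling up to q hires in total. Then for every hiring problem (W, M, s, m) and every sequence of hires λ = ⟨q₁,…,q_t⟩ with q₁+⋯+q_t ≤ |W| and m·(q₁+⋯+q_r) an integer for every r ≤ t, φ(W,λ) = φ^SA(W,λ), the selection of the sequential adjusted minority reserves rule. -/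
open Finset

variable {ι : Type*} [DecidableEq ι]

/-- One round of the minority reserves choice from pool `P`: the `min(⌈m·q⌉, |M ∩ P|)`
highest-scoring available minority workers, then the highest-scoring remaining available
workers filling up to `q` hires in total. -/
noncomputable def smRound (M : Finset ι) (s : ι → ℝ) (m : ℝ) (P : Finset ι) (q : ℕ) :
    Finset ι :=
  let A1 := topOf s (min ⌈m * (q : ℝ)⌉₊ (P ∩ M).card) (P ∩ M)
  A1 ∪ topOf s (q - A1.card) (P \ A1)

/-- The sequential use of minority reserves rule `φ^SM`. -/
noncomputable def phiSM (M : Finset ι) (s : ι → ℝ) (m : ℝ) : Finset ι → List ℕ → Finset ι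
  | _, [] => ∅
  | P, q :: rest => smRound M s m P q ∪ phiSM M s m (P \ smRound M s m P q) rest

/-- One round of the adjusted minority reserves choice from pool `P`: `hired` is the
number of minority workers hired in earlier rounds, `Q` is the cumulative quota up to and
including this round, and `q` is the quota of this round.  First the
`min(max(⌈m·Q⌉ − hired, 0), |M ∩ P|)` highest-scoring available minority workers are
hired, then the highest-scoring remaining available workers fill up to `q` hires. -/
noncomputable def saRound (M : Finset ι) (s : ι → ℝ) (m : ℝ) (P : Finset ι)
    (hired Q q : ℕ) : Finset ι :=
  let A1 := topOf s (min (⌈m * (Q : ℝ)⌉₊ - hired) (P ∩ M).card) (P ∩ M)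
  A1 ∪ topOf s (q - A1.card) (P \ A1)

/-- Auxiliary recursion for the sequential adjusted minority reserves rule:
`P` is the current pool, `A` the set of previously hired workers and `Q` the cumulative
quota of previous rounds. -/
noncomputable def phiSAaux (M : Finset ι) (s : ι → ℝ) (m : ℝ) :
    Finset ι → Finset ι → ℕ → List ℕ → Finset ι
  | _, _, _, [] => ∅
  | P, A, Q, q :: rest =>
    let H := saRound M s m P ((A ∩ M).card) (Q + q) q
    H ∪ phiSAaux M s m (P \ H) (A ∪ H) (Q + q) rest

/-- The sequential adjusted minority reserves rule `φ^SA`. -/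
noncomputable def phiSA (M : Finset ι) (s : ι → ℝ) (m : ℝ) (W : Finset ι)
    (lam : List ℕ) : Finset ι :=
  phiSAaux M s m W ∅ 0 lam

/-!
Write `splitTop a b` for the `a` best minority workers together with the `b` best majority
workers. Topping up `splitTop u v` with the `j` best remaining workers yields
`splitTop a (u + v + j - a)`, where `a` is the number `μ` of minorities among the `u + v + j`
best workers overall, clamped to `[u, u + j]`: if the top-up adds a minority, everyone scoring
above the lowest minority hired is hired, so all hired minorities are among the overall best.
Hence the minority reserves choice for quota `Q` is `splitTop y (Q - y)` with
`y = max (min ⌈m Q⌉ |M ∩ W|) μ_Q`, and since `⌈m Q⌉ ≤ ⌈m (Q + q)⌉ ≤ ⌈m Q⌉ + q`, one round of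
`φ^SA` with quota `q` turns the reserves choice for `Q` into the one for `Q + q`. Aggregation
independence collapses `φ(W, λ)` to the single round `φ(W, ⟨q₁ + ⋯ + q_t⟩)`.
-/

section TopOf

variable {s : ι → ℝ}

@[simp] lemma topOf_zero (X : Finset ι) : topOf s 0 X = ∅ := rfl

lemma topOf_succ (k : ℕ) {X : Finset ι} (h : X.Nonempty) :
    topOf s (k + 1) X = insert (X.exists_max_image s h).choose
      (topOf s k (X.erase (X.exists_max_image s h).choose)) := by
  rw [topOf, dif_pos h]

@[simp] lemma topOf_empty (k : ℕ) : topOf s k (∅ : Finset ι) = ∅ := by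
  cases k <;> simp [topOf]

lemma topOf_subset (k : ℕ) (X : Finset ι) : topOf s k X ⊆ X := by
  induction k generalizing X with
  | zero => simp
  | succ k ih =>
    obtain rfl | h := X.eq_empty_or_nonempty
    · simp
    · rw [topOf_succ k h]
      exact insert_subset (X.exists_max_image s h).choose_spec.1
        ((ih _).trans (erase_subset _ _))

lemma card_topOf_s6 (k : ℕ) (X : Finset ι) : #(topOf s k X) = min k #X := by
  induction k generalizing X with
  | zero => simp
  | succ k ih =>
    obtain rfl | h := X.eq_empty_or_nonempty
    · simp
    · have hc := (X.exists_max_image s h).choose_spec.1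
      rw [topOf_succ k h, card_insert_of_notMem fun hmem => notMem_erase _ _
        (topOf_subset k _ hmem), ih, card_erase_of_mem hc]
      have := card_pos.mpr h
      omega

lemma topOf_add (j k : ℕ) (X : Finset ι) :
    topOf s (j + k) X = topOf s j X ∪ topOf s k (X \ topOf s j X) := by
  induction j generalizing X with
  | zero => simp
  | succ j ih =>
    obtain rfl | h := X.eq_empty_or_nonempty
    · simp
    · set c := (X.exists_max_image s h).choose
      have hX : X \ insert c (topOf s j (X.erase c)) = X.erase c \ topOf s j (X.erase c) := by
        ext x
        simp only [mem_sdiff, mem_erase, mem_insert]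
        tauto
      rw [Nat.add_right_comm, topOf_succ _ h, topOf_succ j h, ih, insert_union, hX]

lemma topOf_mono {j k : ℕ} (h : j ≤ k) (X : Finset ι) : topOf s j X ⊆ topOf s k X := by
  obtain ⟨d, rfl⟩ := Nat.exists_eq_add_of_le h
  rw [topOf_add]
  exact subset_union_left

lemma score_le_of_mem_topOf {k : ℕ} {X : Finset ι} {x y : ι} (hx : x ∈ topOf s k X)
    (hy : y ∈ X) (hy' : y ∉ topOf s k X) : s y ≤ s x := by
  induction k generalizing X with
  | zero => simp at hx
  | succ k ih =>
    have h : X.Nonempty := ⟨y, hy⟩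
    rw [topOf_succ k h] at hx hy'
    rcases mem_insert.mp hx with rfl | hx
    · exact (X.exists_max_image s h).choose_spec.2 y hy
    · exact ih hx (mem_erase.mpr ⟨fun e => hy' (e ▸ mem_insert_self _ _), hy⟩)
        fun hmem => hy' (mem_insert_of_mem hmem)

lemma card_topOf_of_le {k : ℕ} {X : Finset ι} (h : k ≤ #X) : #(topOf s k X) = k := by
  rw [card_topOf_s6, min_eq_left h]

lemma mem_topOf_of_lt {k : ℕ} {X : Finset ι} {x y : ι} (hx : x ∈ topOf s k X)
    (hy : y ∈ X) (h : s x < s y) : y ∈ topOf s k X := by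
  by_contra hy'
  exact (score_le_of_mem_topOf hx hy hy').not_gt h

lemma mem_topOf_of_le {k : ℕ} {X : Finset ι} (hs : Set.InjOn s X) {x y : ι}
    (hx : x ∈ topOf s k X) (hy : y ∈ X) (h : s x ≤ s y) : y ∈ topOf s k X := by
  obtain h | h := h.lt_or_eq
  · exact mem_topOf_of_lt hx hy h
  · rwa [← hs (topOf_subset k X hx) hy h]

end TopOf

section UpwardClosed

variable {s : ι → ℝ}

def IsUpwardClosed (s : ι → ℝ) (X S : Finset ι) : Prop :=
  S ⊆ X ∧ ∀ x ∈ S, ∀ y ∈ X, s x < s y → y ∈ S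

lemma isUpwardClosed_topOf (k : ℕ) (X : Finset ι) : IsUpwardClosed s X (topOf s k X) :=
  ⟨topOf_subset k X, fun _ hx _ hy => mem_topOf_of_lt hx hy⟩

lemma IsUpwardClosed.topOf_card_eq {X S : Finset ι} (hS : IsUpwardClosed s X S)
    (hs : Set.InjOn s X) : topOf s #S X = S := by
  have hcard : #(topOf s #S X) = #S := by rw [card_topOf_s6, min_eq_left (card_le_card hS.1)]
  refine eq_of_subset_of_card_le (fun t ht => ?_) hcard.ge
  by_contra htS
  obtain ⟨u, hu⟩ : (S \ topOf s #S X).Nonempty := by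
    rw [← card_pos, card_sdiff_comm hcard.symm, card_pos]
    exact ⟨t, mem_sdiff.mpr ⟨ht, htS⟩⟩
  obtain ⟨huS, hut⟩ := mem_sdiff.mp hu
  have hle := score_le_of_mem_topOf ht (hS.1 huS) hut
  obtain hlt | heq := hle.lt_or_eq
  · exact htS (hS.2 u huS t (topOf_subset _ _ ht) hlt)
  · exact hut (hs (hS.1 huS) (topOf_subset _ _ ht) heq ▸ ht)

lemma IsUpwardClosed.union_topOf_sdiff {X T G : Finset ι} (hTX : T ⊆ X)
    (hT : IsUpwardClosed s (X ∩ G) (T ∩ G)) (j : ℕ) :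
    IsUpwardClosed s (X ∩ G) ((T ∪ topOf s j (X \ T)) ∩ G) := by
  refine ⟨inter_subset_inter (union_subset hTX ((topOf_subset _ _).trans sdiff_subset))
    subset_rfl, fun x hx y hy h => ?_⟩
  rw [union_inter_distrib_right, mem_union] at hx ⊢
  rcases hx with hx | hx
  · exact .inl (hT.2 x hx y hy h)
  · by_cases hyT : y ∈ T
    · exact .inl (mem_inter.mpr ⟨hyT, (mem_inter.mp hy).2⟩)
    · exact .inr (mem_inter.mpr ⟨mem_topOf_of_lt (mem_inter.mp hx).1
        (mem_sdiff.mpr ⟨(mem_inter.mp hy).1, hyT⟩) h, (mem_inter.mp hy).2⟩)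

lemma subset_topOf_card_of_card_inter_lt {W T G : Finset ι} (hs : Set.InjOn s W)
    (hTW : T ⊆ W) (hT : IsUpwardClosed s (W ∩ G) (T ∩ G)) {j : ℕ}
    (hlt : #(T ∩ G) < #((T ∪ topOf s j (W \ T)) ∩ G)) :
    (T ∪ topOf s j (W \ T)) ∩ G ⊆ topOf s #(T ∪ topOf s j (W \ T)) W := by
  set S := T ∪ topOf s j (W \ T)
  have hSW : S ⊆ W := union_subset hTW ((topOf_subset _ _).trans sdiff_subset)
  obtain ⟨z, hz, hzmin⟩ := (S ∩ G).exists_min_image s (card_pos.mp (by omega))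
  have hzW : z ∈ W := hSW (mem_inter.mp hz).1
  have hzT : z ∉ T := by
    intro hzT
    refine hlt.not_ge (card_le_card fun x hx => ?_)
    obtain hlt | heq := (hzmin x hx).lt_or_eq
    · exact hT.2 z (mem_inter.mpr ⟨hzT, (mem_inter.mp hz).2⟩) x
        (inter_subset_inter hSW subset_rfl hx) hlt
    · rwa [← hs hzW (hSW (mem_inter.mp hx).1) heq, mem_inter, and_iff_left (mem_inter.mp hz).2]
  have hzfill : z ∈ topOf s j (W \ T) := by
    simpa [S, hzT] using (mem_inter.mp hz).1
  -- `z` is a top-up worker, so every worker scoring at least `s z` lies in `S`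
  set U := W.filter fun w => s z ≤ s w
  have hU : IsUpwardClosed s W U :=
    ⟨filter_subset _ _, fun _ hx y hy h => mem_filter.mpr ⟨hy, (mem_filter.mp hx).2.trans h.le⟩⟩
  have hUS : U ⊆ S := fun w hw => by
    obtain ⟨hwW, hzw⟩ := mem_filter.mp hw
    by_cases hwT : w ∈ T
    · exact mem_union_left _ hwT
    · exact mem_union_right _ (mem_topOf_of_le (hs.mono (coe_subset.mpr sdiff_subset))
        hzfill (mem_sdiff.mpr ⟨hwW, hwT⟩) hzw)
  calc S ∩ G ⊆ U := fun x hx => mem_filter.mpr ⟨hSW (mem_inter.mp hx).1, hzmin x hx⟩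
    _ = topOf s #U W := (hU.topOf_card_eq hs).symm
    _ ⊆ topOf s #S W := topOf_mono (card_le_card hUS) W

end UpwardClosed

noncomputable def splitTop (s : ι → ℝ) (W M : Finset ι) (a b : ℕ) : Finset ι :=
  topOf s a (W ∩ M) ∪ topOf s b (W \ M)

section SplitTop

variable {s : ι → ℝ} {W M : Finset ι}

lemma splitTop_subset (a b : ℕ) : splitTop s W M a b ⊆ W :=
  union_subset ((topOf_subset _ _).trans inter_subset_left)
    ((topOf_subset _ _).trans sdiff_subset)

lemma splitTop_inter (a b : ℕ) : splitTop s W M a b ∩ M = topOf s a (W ∩ M) := by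
  ext x
  have h₁ := @topOf_subset _ _ s a (W ∩ M) x
  have h₂ := @topOf_subset _ _ s b (W \ M) x
  simp only [splitTop, mem_inter, mem_union, mem_sdiff] at h₁ h₂ ⊢
  tauto

lemma splitTop_inter_sdiff (a b : ℕ) : splitTop s W M a b ∩ (W \ M) = topOf s b (W \ M) := by
  ext x
  have h₁ := @topOf_subset _ _ s a (W ∩ M) x
  have h₂ := @topOf_subset _ _ s b (W \ M) x
  simp only [splitTop, mem_inter, mem_union, mem_sdiff] at h₁ h₂ ⊢
  tauto

lemma sdiff_splitTop_inter (a b : ℕ) :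
    (W \ splitTop s W M a b) ∩ M = (W ∩ M) \ topOf s a (W ∩ M) := by
  rw [← splitTop_inter a b]
  ext x
  simp only [mem_inter, mem_sdiff]
  tauto

lemma card_splitTop {a b : ℕ} (ha : a ≤ #(W ∩ M)) (hb : b ≤ #(W \ M)) :
    #(splitTop s W M a b) = a + b := by
  rw [splitTop, card_union_of_disjoint, card_topOf_s6, card_topOf_s6, min_eq_left ha, min_eq_left hb]
  exact disjoint_of_subset_left (topOf_subset _ _)
    (disjoint_of_subset_right (topOf_subset _ _) (disjoint_sdiff_inter W M).symm)

lemma splitTop_union_topOf (a b k : ℕ) :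
    splitTop s W M a b ∪ topOf s k ((W ∩ M) \ topOf s a (W ∩ M)) = splitTop s W M (a + k) b := by
  rw [splitTop, splitTop, topOf_add, union_right_comm]

lemma card_inter_add_card_inter_sdiff {X : Finset ι} (hXW : X ⊆ W) :
    #(X ∩ M) + #(X ∩ (W \ M)) = #X := by
  rw [← inter_sdiff_assoc, inter_eq_left.mpr hXW, card_inter_add_card_sdiff]

lemma splitTop_union_topOf_sdiff (hs : Set.InjOn s W) {u v j C : ℕ} (hu : u ≤ #(W ∩ M))
    (hv : v ≤ #(W \ M)) (hC : u + v + j = C) (hCW : C ≤ #W) :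
    splitTop s W M u v ∪ topOf s j (W \ splitTop s W M u v) =
      splitTop s W M (max u (min #(topOf s C W ∩ M) (u + j)))
        (C - max u (min #(topOf s C W ∩ M) (u + j))) := by
  set T := splitTop s W M u v
  set S := T ∪ topOf s j (W \ T)
  have hTW : T ⊆ W := splitTop_subset u v
  have hSW : S ⊆ W := union_subset hTW ((topOf_subset _ _).trans sdiff_subset)
  have hWN : W ∩ (W \ M) = W \ M := inter_eq_right.mpr sdiff_subset
  have hcardT : #T = u + v := card_splitTop hu hv
  have hcardS : #S = C := by
    rw [card_union_of_disjoint (disjoint_of_subset_right (topOf_subset _ _) disjoint_sdiff),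
      card_topOf_s6, card_sdiff_of_subset hTW]
    omega
  have hTM : IsUpwardClosed s (W ∩ M) (T ∩ M) := by
    rw [splitTop_inter]; exact isUpwardClosed_topOf u _
  have hTN : IsUpwardClosed s (W ∩ (W \ M)) (T ∩ (W \ M)) := by
    rw [splitTop_inter_sdiff, hWN]; exact isUpwardClosed_topOf v _
  have hsG (G : Finset ι) : Set.InjOn s ↑(W ∩ G) := hs.mono (coe_subset.mpr inter_subset_left)
  have hSM := ((hTM.union_topOf_sdiff hTW j).topOf_card_eq (hsG M)).symm
  have hSN := ((hTN.union_topOf_sdiff hTW j).topOf_card_eq (hsG (W \ M))).symm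
  rw [hWN] at hSN
  have hS : S = splitTop s W M #(S ∩ M) #(S ∩ (W \ M)) := by
    rw [splitTop, ← hSM, ← hSN, ← inter_union_distrib_left, union_sdiff_self_eq_union,
      inter_eq_left.mpr (hSW.trans subset_union_right)]
  have hab := card_inter_add_card_inter_sdiff (M := M) hSW
  have hua : u ≤ #(S ∩ M) := by
    rw [← card_topOf_of_le hu, ← splitTop_inter u v]
    exact card_le_card (inter_subset_inter subset_union_left subset_rfl)
  have hvb : v ≤ #(S ∩ (W \ M)) := by
    rw [← card_topOf_of_le hv, ← splitTop_inter_sdiff u v]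
    exact card_le_card (inter_subset_inter subset_union_left subset_rfl)
  have haμ : u < #(S ∩ M) → #(S ∩ M) ≤ #(topOf s C W ∩ M) := fun h => by
    rw [← card_topOf_of_le hu, ← splitTop_inter u v] at h
    have := subset_topOf_card_of_card_inter_lt hs hTW hTM h
    rw [hcardS] at this
    exact card_le_card (subset_inter this inter_subset_right)
  have hbν : v < #(S ∩ (W \ M)) → #(S ∩ (W \ M)) ≤ #(topOf s C W ∩ (W \ M)) := fun h => by
    rw [← card_topOf_of_le hv, ← splitTop_inter_sdiff u v] at h
    have := subset_topOf_card_of_card_inter_lt hs hTW hTN h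
    rw [hcardS] at this
    exact card_le_card (subset_inter this inter_subset_right)
  have hμν := card_inter_add_card_inter_sdiff (M := M) (topOf_subset (s := s) C W)
  rw [card_topOf_s6, min_eq_left hCW] at hμν
  rw [hS]
  congr 1 <;> omega

end SplitTop

section Reserves

variable {s : ι → ℝ} {W M : Finset ι} {m : ℝ}

lemma ceil_mul_le_self (hm1 : m ≤ 1) (n : ℕ) : ⌈m * n⌉₊ ≤ n :=
  Nat.ceil_le.mpr (mul_le_of_le_one_left n.cast_nonneg hm1)

lemma ceil_mul_add_le (hm0 : 0 ≤ m) (hm1 : m ≤ 1) (Q q : ℕ) :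
    ⌈m * ↑(Q + q)⌉₊ ≤ ⌈m * Q⌉₊ + q := by
  rw [← Nat.ceil_add_natCast (by positivity)]
  refine Nat.ceil_le_ceil ?_
  push_cast
  nlinarith [(q.cast_nonneg : (0 : ℝ) ≤ q)]

lemma smRound_eq_splitTop (hs : Set.InjOn s W) (hm1 : m ≤ 1) {Q : ℕ}
    (hQ : Q ≤ #W) :
    smRound M s m W Q = splitTop s W M (max (min ⌈m * Q⌉₊ #(W ∩ M)) #(topOf s Q W ∩ M))
      (Q - max (min ⌈m * Q⌉₊ #(W ∩ M)) #(topOf s Q W ∩ M)) := by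
  set u := min ⌈m * Q⌉₊ #(W ∩ M)
  have hu : u ≤ #(W ∩ M) := min_le_right _ _
  have huQ : u ≤ Q := (min_le_left _ _).trans (ceil_mul_le_self hm1 Q)
  have hμQ : #(topOf s Q W ∩ M) ≤ Q :=
    (card_le_card inter_subset_left).trans (card_topOf_of_le hQ).le
  have h := splitTop_union_topOf_sdiff (M := M) hs hu (Nat.zero_le _) (j := Q - u)
    (by omega) hQ
  have hT : splitTop s W M u 0 = topOf s u (W ∩ M) := by simp [splitTop]
  rw [hT, min_eq_left (by omega : #(topOf s Q W ∩ M) ≤ u + (Q - u))] at h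
  rw [smRound, card_topOf_of_le hu, h]

lemma smRound_union_saRound (hs : Set.InjOn s W) (hm0 : 0 ≤ m) (hm1 : m ≤ 1) {Q q : ℕ}
    (hQq : Q + q ≤ #W) :
    smRound M s m W Q ∪ saRound M s m (W \ smRound M s m W Q) #(smRound M s m W Q ∩ M)
      (Q + q) q = smRound M s m W (Q + q) := by
  rw [smRound_eq_splitTop hs hm1 (by omega : Q ≤ #W), smRound_eq_splitTop hs hm1 hQq]
  set K := ⌈m * Q⌉₊
  set K' := ⌈m * ↑(Q + q)⌉₊
  set μ := #(topOf s Q W ∩ M)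
  set μ' := #(topOf s (Q + q) W ∩ M)
  set y := max (min K #(W ∩ M)) μ
  have hKQ : K ≤ Q := ceil_mul_le_self hm1 Q
  have hKK' : K ≤ K' := Nat.ceil_le_ceil (mul_le_mul_of_nonneg_left (by simp) hm0)
  have hK'K : K' ≤ K + q := ceil_mul_add_le hm0 hm1 Q q
  have hμμ' : μ ≤ μ' := card_le_card (inter_subset_inter (topOf_mono (by omega) W) subset_rfl)
  have hνν' : #(topOf s Q W ∩ (W \ M)) ≤ #(topOf s (Q + q) W ∩ (W \ M)) :=
    card_le_card (inter_subset_inter (topOf_mono (by omega) W) subset_rfl)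
  have hμν := card_inter_add_card_inter_sdiff (M := M) (topOf_subset (s := s) Q W)
  have hμν' := card_inter_add_card_inter_sdiff (M := M) (topOf_subset (s := s) (Q + q) W)
  have hν : #(topOf s Q W ∩ (W \ M)) ≤ #(W \ M) := card_le_card inter_subset_right
  have hμ' : μ' ≤ #(W ∩ M) := card_le_card (inter_subset_inter (topOf_subset _ _) subset_rfl)
  rw [card_topOf_of_le (by omega)] at hμν
  rw [card_topOf_of_le hQq] at hμν'
  have hy : y ≤ #(W ∩ M) := by omega
  have hrest : #((W ∩ M) \ topOf s y (W ∩ M)) = #(W ∩ M) - y := by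
    rw [card_sdiff_of_subset (topOf_subset _ _), card_topOf_of_le hy]
  set k := min (K' - y) (#(W ∩ M) - y)
  rw [saRound, splitTop_inter, sdiff_splitTop_inter, card_topOf_of_le hy, hrest,
    card_topOf_of_le (hrest ▸ min_le_right _ _), ← union_assoc, Finset.sdiff_sdiff_left',
    ← sdiff_union_distrib, splitTop_union_topOf,
    splitTop_union_topOf_sdiff hs (C := Q + q) ?_ ?_ ?_ hQq]
  · congr 1 <;> omega
  all_goals omega

@[simp] lemma smRound_zero : smRound M s m W 0 = ∅ := by
  simp [smRound]

lemma smRound_union_phiSAaux (hs : Set.InjOn s W) (hm0 : 0 ≤ m) (hm1 : m ≤ 1) (lam : List ℕ)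
    {Q : ℕ} (hQ : Q + lam.sum ≤ #W) :
    smRound M s m W Q ∪ phiSAaux M s m (W \ smRound M s m W Q) (smRound M s m W Q) Q lam =
      smRound M s m W (Q + lam.sum) := by
  induction lam generalizing Q with
  | nil => simp [phiSAaux]
  | cons q rest ih =>
    rw [List.sum_cons] at hQ ⊢
    rw [phiSAaux, ← union_assoc, Finset.sdiff_sdiff_left', ← sdiff_union_distrib,
      smRound_union_saRound hs hm0 hm1 (by omega), ih (by omega), add_assoc]

lemma phiSA_eq_smRound (hs : Set.InjOn s W) (hm0 : 0 ≤ m) (hm1 : m ≤ 1) {lam : List ℕ}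
    (hlam : lam.sum ≤ #W) : phiSA M s m W lam = smRound M s m W lam.sum := by
  have h := smRound_union_phiSAaux (M := M) hs hm0 hm1 lam (Q := 0) (by omega)
  rw [smRound_zero, sdiff_empty, empty_union, zero_add] at h
  exact h

end Reserves

lemma Rule.seq_eq_sel_sum {φ : Rule ι} (hφ : φ.AggIndep) (M : Finset ι) (s : ι → ℝ) (m : ℝ)
    (lam : List ℕ) (W A : Finset ι) : φ.seq M s m W A lam = φ.sel M s m W A lam.sum := by
  induction lam generalizing W A with
  | nil => exact (card_eq_zero.mp (by simp [φ.sel_card])).symm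
  | cons q rest ih =>
    rw [Rule.seq, ih, List.sum_cons, hφ M s m W A (q + rest.sum) q (Nat.le_add_right _ _),
      Nat.add_sub_cancel_left]
    simp only [Rule.seq, union_empty]

theorem aggindep_minority_reserves_is_phiSA_general (φ : Rule ι)
    (hφA : φ.AggIndep)
    (hφSM : ∀ (M : Finset ι) (s : ι → ℝ) (m : ℝ) (W A : Finset ι) (q : ℕ),
      0 ≤ m → m ≤ 1 → q ≤ W.card → φ.sel M s m W A q = smRound M s m W q)
    (W M : Finset ι) (s : ι → ℝ) (m : ℝ) (lam : List ℕ)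
    (hs : Set.InjOn s ↑W) (hm0 : 0 ≤ m) (hm1 : m ≤ 1)
    (hsum : lam.sum ≤ W.card) :
    φ.seq M s m W ∅ lam = phiSA M s m W lam := by
  rw [φ.seq_eq_sel_sum hφA, hφSM M s m W ∅ lam.sum hm0 hm1 hsum,
    phiSA_eq_smRound hs hm0 hm1 hsum]

/-- If `φ` is an aggregation independent rule whose single-round choice
`φ(W,A,⟨q⟩)` (for every pool `W`, previously hired set `A`, and `q ≤ |W|`) is the
minority reserves choice from `W` — the `min(⌈m·q⌉, |M ∩ W|)` highest-scoring available
minority workers together with the highest-scoring remaining available workers filling up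
to `q` hires — then for every hiring problem `(W, M, s, m)` and every sequence of hires
`λ = ⟨q₁,…,q_t⟩` with `q₁+⋯+q_t ≤ |W|` and `m·(q₁+⋯+q_r)` an integer for every `r ≤ t`,
`φ(W,λ) = φ^SA(W,λ)`. -/
theorem aggindep_minority_reserves_is_phiSA (φ : Rule ι)
    (hφA : φ.AggIndep)
    (hφSM : ∀ (M : Finset ι) (s : ι → ℝ) (m : ℝ) (W A : Finset ι) (q : ℕ),
      0 ≤ m → m ≤ 1 → q ≤ W.card → φ.sel M s m W A q = smRound M s m W q)
    (W M : Finset ι) (s : ι → ℝ) (m : ℝ) (lam : List ℕ)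
    (hMW : M ⊆ W) (hs : Set.InjOn s ↑W) (hm0 : 0 ≤ m) (hm1 : m ≤ 1)
    (hsum : lam.sum ≤ W.card)
    (hint : ∀ r : ℕ, ∃ k : ℕ, m * (((lam.take r).sum : ℕ) : ℝ) = (k : ℝ)) :
    φ.seq M s m W ∅ lam = phiSA M s m W lam :=
  aggindep_minority_reserves_is_phiSA_general φ hφA hφSM W M s m lam hs hm0 hm1 hsum
end

section
/- Fairness is in general incompatible with respecting minority rights: there exist a finite set of workers W, a subset M ⊆ W of minority workers, an injective score function s, a minority ratio m with 0 ≤ m ≤ 1, and a quota q ≤ |W| such that no set H ⊆ W with |H| = q both is fair (every worker in H has a strictly higher score than every worker in W ∖ H) and respects minority rights for quota q. -/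
open Finset

variable {ι : Type*} [DecidableEq ι]

/-- Fairness is in general incompatible with respecting minority
rights: there is a hiring problem `(W, M, s, m)` and a quota `q ≤ |W|` such that no
`H ⊆ W` with `|H| = q` is both fair (every hired worker has a strictly higher score than
every non-hired worker) and respects minority rights for quota `q`. -/
theorem fairness_incompatible_rights :
    ∃ (W M : Finset ℕ) (s : ℕ → ℝ) (m : ℝ) (q : ℕ),
      M ⊆ W ∧ Set.InjOn s ↑W ∧ 0 ≤ m ∧ m ≤ 1 ∧ q ≤ W.card ∧
      ¬ ∃ H : Finset ℕ, H ⊆ W ∧ H.card = q ∧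
          (∀ w ∈ H, ∀ w' ∈ W \ H, s w' < s w) ∧ RespectsRightsSet M m q H := by
  refine ⟨{0, 1}, {0}, (fun n => (n : ℝ)), 1, 1, ?_, ?_, ?_, ?_, ?_, ?_⟩
  · intro x hx; simp at hx; simp [hx]
  · intro x _ y _ h; exact Nat.cast_injective h
  · norm_num
  · norm_num
  · simp
  · rintro ⟨H, hsub, hcard, hfair, hr⟩
    obtain ⟨a, ha⟩ := Finset.card_eq_one.mp hcard
    have haW : a ∈ ({0, 1} : Finset ℕ) := hsub (by simp [ha])
    simp only [Finset.mem_insert, Finset.mem_singleton] at haW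
    rcases haW with rfl | rfl
    · have h1 : (1 : ℕ) ∈ ({0, 1} : Finset ℕ) \ H := by simp [ha]
      have := hfair 0 (by simp [ha]) 1 h1
      norm_num at this
    · rcases hr with ⟨_, h2⟩ | ⟨h1, _⟩
      · have : H ∩ {0} = ∅ := by simp [ha]
        rw [this] at h2
        norm_num [hcard] at h2
      · norm_num at h1
end
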